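/- Let T be a tournament, R a minimal τ-retentive set of T, and u → v an arc in the directed domination graph of T[R]. Then no vertex of T dominates both u and v. -/

import Mathlib

variable {V : Type}

/-- Inneighbors of `v` inside the subtournament on `s` (excluding `v` itself). -/
def inn [DecidableEq V] (r : V → V → Prop) [DecidableRel r] (s : Finset V) (v : V) :
    Finset V :=
  (s.filter fun u => r u v).erase v

lemma inn_card_lt [DecidableEq V] (r : V → V → Prop) [DecidableRel r]
    (s : Finset V) (v : V) (hv : v ∈ s) : (inn r s v).card < s.card := by
  have h1 : inn r s v ⊆ s.erase v := by
    intro x hx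
    rcases Finset.mem_erase.mp hx with ⟨hxv, hx2⟩
    exact Finset.mem_erase.mpr ⟨hxv, (Finset.mem_filter.mp hx2).1⟩
  calc (inn r s v).card ≤ (s.erase v).card := Finset.card_le_card h1
    _ < s.card := Finset.card_erase_lt_of_mem hv

/-- The tournament equilibrium set of the subtournament of `r` on `s`:
the union of all minimal τ-retentive sets. -/
def tau [DecidableEq V] (r : V → V → Prop) [DecidableRel r] (s : Finset V) : Set V :=
  {x | ∃ A : Finset V, x ∈ A ∧ A ⊆ s ∧ A.Nonempty ∧
    (∀ v, v ∈ s → v ∈ A → ((inn r s v).Nonempty → tau r (inn r s v) ⊆ ↑A)) ∧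
    ∀ B : Finset V, B ⊆ s → B ⊂ A →
      ¬ (B.Nonempty ∧
        ∀ v, v ∈ s → v ∈ B → ((inn r s v).Nonempty → tau r (inn r s v) ⊆ ↑B))}
termination_by s.card
decreasing_by
  all_goals exact inn_card_lt r s v (by assumption)

/-- `A` is a τ-retentive set of the tournament on `s`. -/
def Retentive [DecidableEq V] (r : V → V → Prop) [DecidableRel r] (s A : Finset V) : Prop :=
  A ⊆ s ∧ A.Nonempty ∧ ∀ v ∈ A, (inn r s v).Nonempty → tau r (inn r s v) ⊆ ↑A

/-- `A` is a minimal τ-retentive set of the tournament on `s`. -/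
def MinRetentive [DecidableEq V] (r : V → V → Prop) [DecidableRel r] (s A : Finset V) : Prop :=
  Retentive r s A ∧ ∀ B, Retentive r s B → B ⊆ A → B = A

/-- `r` is a tournament on the vertex set `s`. -/
def IsTournament (r : V → V → Prop) (s : Finset V) : Prop :=
  (∀ v ∈ s, ¬ r v v) ∧ ∀ u ∈ s, ∀ v ∈ s, u ≠ v → (r u v ↔ ¬ r v u)

/-- `u` is the captain of `v` in the subtournament on `s`:
`u` dominates `v` and all other inneighbors of `v`. -/
def IsCaptain (r : V → V → Prop) (s : Finset V) (u v : V) : Prop :=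
  u ∈ s ∧ v ∈ s ∧ r u v ∧ ∀ w ∈ s, w ≠ u → r w v → r u w

/-- The (undirected) domination graph of the subtournament on `s`. -/
def domGraph (r : V → V → Prop) (s : Finset V) : SimpleGraph V where
  Adj u v := (IsCaptain r s u v ∨ IsCaptain r s v u) ∧ u ≠ v
  symm := by
    constructor
    intro u v h
    exact ⟨h.1.symm, h.2.symm⟩
  loopless := by
    constructor
    intro u h
    exact h.2 rfl

/-!
Suppose `w` dominates both `u` and `v`. The minimal τ-retentive sets `B` of `T[N⁻(v)]` lie in `R`,
so the captain `u` dominates every vertex of `B` but itself; as no outside vertex dominates a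
retentive set, `u ∈ B`. Now `w ∈ N⁻(u)` inside `N⁻(v)`, so `τ(N⁻(u)) ⊆ B` is nonempty, and any
of its vertices `c` beats `u` while, lying in `R ∩ N⁻(v)`, it is beaten by the captain `u`.
-/

section Retentive

variable [DecidableEq V] {r : V → V → Prop} [DecidableRel r]

@[simp]
lemma mem_inn {s : Finset V} {v x : V} : x ∈ inn r s v ↔ x ≠ v ∧ x ∈ s ∧ r x v := by
  simp [inn]

lemma inn_subset (s : Finset V) (v : V) : inn r s v ⊆ s := fun _ hx => (mem_inn.mp hx).2.1

lemma tau_subset (s : Finset V) : tau r s ⊆ ↑s := by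
  intro x hx
  rw [tau] at hx
  obtain ⟨A, hxA, hAs, -⟩ := hx
  exact hAs hxA

lemma retentive_self {s : Finset V} (hs : s.Nonempty) : Retentive r s s :=
  ⟨subset_rfl, hs, fun v _ _ => (tau_subset _).trans (Finset.coe_subset.mpr (inn_subset s v))⟩

lemma exists_minRetentive {s : Finset V} (hs : s.Nonempty) : ∃ A, MinRetentive r s A := by
  obtain ⟨A, hA, hmin⟩ :=
    wellFounded_lt.has_min {A : Finset V | Retentive r s A} ⟨s, retentive_self hs⟩
  exact ⟨A, hA, fun B hB hBA => of_not_not fun hne => hmin B hB (lt_of_le_of_ne hBA hne)⟩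

lemma MinRetentive.coe_subset_tau {s A : Finset V} (hA : MinRetentive r s A) :
    ↑A ⊆ tau r s := by
  obtain ⟨⟨hAs, hAne, hret⟩, hmin⟩ := hA
  intro x hx
  rw [tau]
  refine ⟨A, hx, hAs, hAne, fun v _ hv => hret v hv, fun B hBs hBA ⟨hBne, hBret⟩ => ?_⟩
  exact hBA.ne (hmin B ⟨hBs, hBne, fun v hv => hBret v (hBs hv) hv⟩ hBA.subset)

lemma tau_nonempty {s : Finset V} (hs : s.Nonempty) : (tau r s).Nonempty := by
  obtain ⟨A, hA⟩ := exists_minRetentive (r := r) hs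
  obtain ⟨x, hx⟩ := hA.1.2.1
  exact ⟨x, hA.coe_subset_tau hx⟩

lemma Retentive.exists_minRetentive_inn_subset {s A : Finset V} {v : V}
    (hA : Retentive r s A) (hv : v ∈ A) (hinn : (inn r s v).Nonempty) :
    ∃ B, MinRetentive r (inn r s v) B ∧ B ⊆ A := by
  obtain ⟨B, hB⟩ := exists_minRetentive (r := r) hinn
  exact ⟨B, hB, Finset.coe_subset.mp (hB.coe_subset_tau.trans (hA.2.2 v hv hinn))⟩

/-- If `u` dominated a retentive set `A`, it would lie in `N⁻(a)` for every `a ∈ A`,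
whose minimal retentive sets lie in `A` and are again dominated by `u`: an infinite descent. -/
theorem Retentive.exists_not_dominated {s A : Finset V} {u : V} (hA : Retentive r s A)
    (hu : u ∈ s) (huA : u ∉ A) : ∃ a ∈ A, ¬ r u a := by
  by_contra! hdom
  obtain ⟨a, ha⟩ := hA.2.1
  have hua : u ∈ inn r s a := mem_inn.mpr ⟨fun h => huA (h ▸ ha), hu, hdom a ha⟩
  obtain ⟨B, hB, hBA⟩ := hA.exists_minRetentive_inn_subset ha ⟨u, hua⟩
  obtain ⟨b, hb, hub⟩ := hB.1.exists_not_dominated hua (fun h => huA (hBA h))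
  exact hub (hdom b (hBA hb))
termination_by s.card
decreasing_by exact inn_card_lt r s a (hA.1 ha)

end Retentive

theorem stmt12 [DecidableEq V] (r : V → V → Prop) [DecidableRel r] (s : Finset V)
    (hT : IsTournament r s) (R : Finset V) (hR : MinRetentive r s R)
    (u v : V) (harc : IsCaptain r R u v) :
    ∀ w ∈ s, ¬ (r w u ∧ r w v) := by
  rintro w hw ⟨hwu, hwv⟩
  obtain ⟨huR, hvR, huv, hcap⟩ := harc
  have hus : u ∈ s := hR.1.1 huR
  have hvs : v ∈ s := hR.1.1 hvR
  have hirr {x y : V} (hy : y ∈ s) (hxy : r x y) : x ≠ y := fun h => hT.1 y hy (h ▸ hxy)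
  have huD : u ∈ inn r s v := mem_inn.mpr ⟨hirr hvs huv, hus, huv⟩
  have hwD : w ∈ inn r s v := mem_inn.mpr ⟨hirr hvs hwv, hw, hwv⟩
  obtain ⟨B, hB, hBR⟩ := hR.1.exists_minRetentive_inn_subset hvR ⟨u, huD⟩
  have huB : u ∈ B := by
    by_contra huB
    obtain ⟨b, hb, hub⟩ := hB.1.exists_not_dominated huD huB
    exact hub (hcap b (hBR hb) (fun h => huB (h ▸ hb)) (mem_inn.mp (hB.1.1 hb)).2.2)
  have hinn : (inn r (inn r s v) u).Nonempty := ⟨w, mem_inn.mpr ⟨hirr hus hwu, hwD, hwu⟩⟩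
  obtain ⟨c, hc⟩ := tau_nonempty (r := r) hinn
  have hcB : c ∈ B := hB.1.2.2 u huB hinn hc
  obtain ⟨hcu, hcD, hcu'⟩ := mem_inn.mp (tau_subset _ hc)
  obtain ⟨-, hcs, hcv⟩ := mem_inn.mp hcD
  exact (hT.2 c hcs u hus hcu).mp hcu' (hcap c (hBR hcB) hcu hcv)
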